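/- Let m, n ∈ ℕ and let w : (ℝ³×{1,2})^{m+n} → ℂ be measurable and essentially bounded with respect to the (m+n)-fold product μ of (Lebesgue measure on ℝ³ times counting measure on {1,2}), and suppose w vanishes μ-almost everywhere outside the set S̲_{m,n} := { ((k_1,λ_1),…,(k_m,λ_m),(k̃_1,λ̃_1),…,(k̃_n,λ̃_n)) ∈ (ℝ³×{1,2})^{m+n} : |k_i| < 1 for all i, |k̃_j| < 1 for all j, Σ_{i=1}^{m} |k_i| ≤ 1 and Σ_{j=1}^{n} |k̃_j| ≤ 1 }. Then ( ∫ (8π)^{-(m+n)} ∏_{i=1}^{m} |k_i|^{-2} · ∏_{j=1}^{n} |k̃_j|^{-2} · |w|² dμ )^{1/2} ≤ ‖w‖_{L^∞} · (m!·n!)^{-1/2}. -/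

import Mathlib

open MeasureTheory
open scoped ENNReal

noncomputable section

/-- The measure on a single photon variable `K = (k, λ) ∈ ℝ³ × {1,2}`:
Lebesgue measure times counting measure. -/
def photonMeasure : Measure (EuclideanSpace ℝ (Fin 3) × Fin 2) :=
  (volume : Measure (EuclideanSpace ℝ (Fin 3))).prod (Measure.count : Measure (Fin 2))

/-- The `(m+n)`-fold product measure on tuples `(K⁽ᵐ⁾, K̃⁽ⁿ⁾)`. -/
def photonProdMeasure (m n : ℕ) :
    Measure ((Fin m → EuclideanSpace ℝ (Fin 3) × Fin 2) ×
      (Fin n → EuclideanSpace ℝ (Fin 3) × Fin 2)) :=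
  (Measure.pi fun _ : Fin m => photonMeasure).prod (Measure.pi fun _ : Fin n => photonMeasure)

/-- The set `S̲_{m,n}`: all `|kᵢ| < 1`, all `|k̃ⱼ| < 1`, `Σᵢ |kᵢ| ≤ 1` and `Σⱼ |k̃ⱼ| ≤ 1`. -/
def underlineS (m n : ℕ) :
    Set ((Fin m → EuclideanSpace ℝ (Fin 3) × Fin 2) ×
      (Fin n → EuclideanSpace ℝ (Fin 3) × Fin 2)) :=
  {x | (∀ i, ‖(x.1 i).1‖ < 1) ∧ (∀ j, ‖(x.2 j).1‖ < 1) ∧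
    (∑ i, ‖(x.1 i).1‖) ≤ 1 ∧ (∑ j, ‖(x.2 j).1‖) ≤ 1}

/-!
Since `|w|² ≤ ‖w‖²_∞` a.e. and `w` vanishes off `S̲_{m,n}`, Fubini reduces the claim to the
weighted simplex integral `J_m(t) = ∫_{Σ |kᵢ| ≤ t} ∏ |kᵢ|⁻² dμ = (8πt)^m / m!`. Peeling off one
photon and passing to polar coordinates in `ℝ³`, the weight `|k|⁻²` cancels the Jacobian `r²`,
while the two polarisations and the area `4π` of the unit sphere give the factor `8π`:
`J_{m+1}(t) = 8π ∫₀ᵗ J_m(t - r) dr`.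
-/

open Measure Set Metric Real

local notation "Photon" => EuclideanSpace ℝ (Fin 3) × Fin 2

theorem lintegral_fun_norm_addHaar {E : Type*} [NormedAddCommGroup E] [NormedSpace ℝ E]
    [FiniteDimensional ℝ E] [MeasurableSpace E] [BorelSpace E] [Nontrivial E]
    (μ : Measure E) [μ.IsAddHaarMeasure] {f : ℝ → ℝ≥0∞} (hf : Measurable f) :
    ∫⁻ x, f ‖x‖ ∂μ = Module.finrank ℝ E * μ (ball 0 1) *
      ∫⁻ r in Ioi 0, ENNReal.ofReal (r ^ (Module.finrank ℝ E - 1)) * f r :=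
  calc ∫⁻ x, f ‖x‖ ∂μ = ∫⁻ x : ({0}ᶜ : Set E), f ‖x.1‖ ∂(μ.comap (↑)) := by
        rw [lintegral_subtype_comap (measurableSet_singleton _).compl fun x ↦ f ‖x‖,
          restrict_compl_singleton]
    _ = ∫⁻ p, f p.2 ∂μ.toSphere.prod (volumeIoiPow (Module.finrank ℝ E - 1)) := by
        simpa using μ.measurePreserving_homeomorphUnitSphereProd.lintegral_comp_emb
          (Homeomorph.measurableEmbedding _) (f ∘ Subtype.val ∘ Prod.snd)
    _ = μ.toSphere univ * ∫⁻ r, f r ∂volumeIoiPow (Module.finrank ℝ E - 1) := by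
        rw [lintegral_prod (fun p : sphere (0 : E) 1 × Ioi (0 : ℝ) ↦ f p.2)
          ((hf.comp measurable_subtype_coe).comp measurable_snd).aemeasurable]
        simp [mul_comm]
    _ = _ := by
        rw [toSphere_apply_univ, volumeIoiPow, ← lintegral_subtype_comap measurableSet_Ioi]
        exact congrArg _ (lintegral_withDensity_eq_lintegral_mul _
          (measurable_subtype_coe.pow_const _).ennreal_ofReal (hf.comp measurable_subtype_coe))

theorem lintegral_pi_fin_succ {α : Type*} [MeasurableSpace α] (μ : Measure α) [SigmaFinite μ]
    {m : ℕ} {f : (Fin (m + 1) → α) → ℝ≥0∞} (hf : Measurable f) :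
    ∫⁻ a, f a ∂Measure.pi (fun _ ↦ μ) =
      ∫⁻ x, ∫⁻ b, f (Fin.cons x b) ∂Measure.pi (fun _ ↦ μ) ∂μ := by
  rw [← (measurePreserving_piFinSuccAbove (fun _ : Fin (m + 1) ↦ μ) 0).symm.lintegral_comp hf,
    lintegral_prod (fun p ↦ f ((MeasurableEquiv.piFinSuccAbove _ 0).symm p))
      (hf.comp (MeasurableEquiv.piFinSuccAbove _ 0).symm.measurable).aemeasurable]
  simp [MeasurableEquiv.piFinSuccAbove_symm_apply, Fin.consEquiv]

theorem setLIntegral_prod_mul {α β : Type*} [MeasurableSpace α] [MeasurableSpace β]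
    {μ : Measure α} {ν : Measure β} [SFinite μ] [SFinite ν] {f : α → ℝ≥0∞} {g : β → ℝ≥0∞}
    (hf : Measurable f) (hg : Measurable g) (s : Set α) (t : Set β) :
    ∫⁻ x in s ×ˢ t, f x.1 * g x.2 ∂μ.prod ν = (∫⁻ x in s, f x ∂μ) * ∫⁻ y in t, g y ∂ν := by
  rw [← prod_restrict]
  exact lintegral_prod_mul hf.aemeasurable hg.aemeasurable

theorem lintegral_mul_enorm_pow_le_of_ae_eq_zero {α E : Type*} [MeasurableSpace α]
    [NormedAddCommGroup E] {μ : Measure α} {g : α → ℝ≥0∞} {w : α → E} {s : Set α}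
    (hg : Measurable g) (hs : MeasurableSet s) (hw : ∀ᵐ x ∂μ, x ∉ s → w x = 0)
    {k : ℕ} (hk : k ≠ 0) :
    ∫⁻ x, g x * ‖w x‖ₑ ^ k ∂μ ≤ eLpNorm w ⊤ μ ^ k * ∫⁻ x in s, g x ∂μ := by
  rw [← lintegral_const_mul _ hg, ← lintegral_indicator hs]
  refine lintegral_mono_ae ?_
  filter_upwards [hw, ae_le_eLpNormEssSup (f := w)] with x hx hx_le
  by_cases hxs : x ∈ s
  · rw [indicator_of_mem hxs, mul_comm, eLpNorm_exponent_top]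
    gcongr
  · simp [hx hxs, hk]

theorem setLIntegral_Ioc_ofReal_sub_pow {t : ℝ} (ht : 0 ≤ t) (m : ℕ) :
    ∫⁻ r in Ioc 0 t, ENNReal.ofReal ((t - r) ^ m) = ENNReal.ofReal (t ^ (m + 1) / (m + 1)) := by
  rw [← ofReal_integral_eq_lintegral_ofReal (by fun_prop : Continuous _).integrableOn_Ioc
    (ae_restrict_of_forall_mem measurableSet_Ioc fun r hr ↦ pow_nonneg (sub_nonneg.2 hr.2) m),
    ← intervalIntegral.integral_of_le ht, intervalIntegral.integral_comp_sub_left (· ^ m),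
    integral_pow]
  simp

instance : SigmaFinite photonMeasure := by unfold photonMeasure; infer_instance

theorem lintegral_photonMeasure_fun_norm {f : ℝ → ℝ≥0∞} (hf : Measurable f) :
    ∫⁻ K, f ‖K.1‖ ∂photonMeasure =
      ENNReal.ofReal (8 * π) * ∫⁻ r in Ioi 0, ENNReal.ofReal (r ^ 2) * f r := by
  rw [photonMeasure, lintegral_prod (fun K ↦ f ‖K.1‖) (hf.comp measurable_fst.norm).aemeasurable]
  simp only [lintegral_const, count_univ, ENat.card_eq_coe_fintype_card, Fintype.card_fin]
  rw [lintegral_mul_const' _ _ (by simp), lintegral_fun_norm_addHaar _ hf]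
  simp only [finrank_euclideanSpace_fin, EuclideanSpace.volume_ball_fin_three]
  rw [mul_right_comm]
  congr 1
  rw [ENNReal.ofReal_one, one_pow, one_mul,
    show (((2 : ℕ) : ℕ∞) : ℝ≥0∞) = ENNReal.ofReal 2 by simp,
    show ((3 : ℕ) : ℝ≥0∞) = ENNReal.ofReal 3 by simp, ← ENNReal.ofReal_mul (by norm_num),
    ← ENNReal.ofReal_mul (by positivity)]
  congr 1
  ring

def photonWeight (m : ℕ) (a : Fin m → Photon) : ℝ≥0∞ :=
  ∏ i, (ENNReal.ofReal (‖(a i).1‖ ^ 2))⁻¹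

def momentumSimplex (m : ℕ) (t : ℝ) : Set (Fin m → Photon) :=
  {a | ∑ i, ‖(a i).1‖ ≤ t}

def weightedSimplexIntegral (m : ℕ) (t : ℝ) : ℝ≥0∞ :=
  ∫⁻ a in momentumSimplex m t, photonWeight m a ∂Measure.pi fun _ ↦ photonMeasure

@[fun_prop]
theorem measurable_photonWeight (m : ℕ) : Measurable (photonWeight m) := by
  unfold photonWeight
  fun_prop

theorem measurableSet_momentumSimplex (m : ℕ) (t : ℝ) : MeasurableSet (momentumSimplex m t) :=
  measurableSet_le (by fun_prop) measurable_const

theorem momentumSimplex_eq_empty {m : ℕ} {t : ℝ} (ht : t < 0) : momentumSimplex m t = ∅ :=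
  eq_empty_of_forall_notMem fun _ ha ↦
    (ht.trans_le (Finset.sum_nonneg fun _ _ ↦ norm_nonneg _)).not_ge ha

theorem momentumSimplex_zero {t : ℝ} (ht : 0 ≤ t) : momentumSimplex 0 t = univ :=
  eq_univ_of_forall fun a ↦ by simp [momentumSimplex, ht]

theorem indicator_momentumSimplex_cons (m : ℕ) (t : ℝ) (K : Photon) (b : Fin m → Photon) :
    (momentumSimplex (m + 1) t).indicator (photonWeight (m + 1)) (Fin.cons K b) =
      (ENNReal.ofReal (‖K.1‖ ^ 2))⁻¹ *
        (momentumSimplex m (t - ‖K.1‖)).indicator (photonWeight m) b := by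
  simp only [indicator, momentumSimplex, photonWeight, mem_ofPred_eq, Fin.sum_univ_succ,
    Fin.prod_univ_succ, Fin.cons_zero, Fin.cons_succ, le_sub_iff_add_le']
  split_ifs <;> simp

theorem monotone_weightedSimplexIntegral (m : ℕ) : Monotone (weightedSimplexIntegral m) :=
  fun _ _ hst ↦ lintegral_mono_set fun _ ha ↦ le_trans ha hst

@[fun_prop]
theorem measurable_weightedSimplexIntegral (m : ℕ) : Measurable (weightedSimplexIntegral m) :=
  (monotone_weightedSimplexIntegral m).measurable

theorem weightedSimplexIntegral_of_neg (m : ℕ) {t : ℝ} (ht : t < 0) :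
    weightedSimplexIntegral m t = 0 := by
  simp [weightedSimplexIntegral, momentumSimplex_eq_empty ht]

theorem weightedSimplexIntegral_succ (m : ℕ) (t : ℝ) :
    weightedSimplexIntegral (m + 1) t =
      ENNReal.ofReal (8 * π) * ∫⁻ r in Ioi 0, weightedSimplexIntegral m (t - r) := by
  calc weightedSimplexIntegral (m + 1) t
      = ∫⁻ K, (ENNReal.ofReal (‖K.1‖ ^ 2))⁻¹ * weightedSimplexIntegral m (t - ‖K.1‖)
          ∂photonMeasure := by
        rw [weightedSimplexIntegral, ← lintegral_indicator (measurableSet_momentumSimplex _ _),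
          lintegral_pi_fin_succ _ ((measurable_photonWeight _).indicator
            (measurableSet_momentumSimplex _ _))]
        simp only [indicator_momentumSimplex_cons]
        refine lintegral_congr fun K ↦ ?_
        rw [lintegral_const_mul _ ((measurable_photonWeight _).indicator
            (measurableSet_momentumSimplex _ _)),
          lintegral_indicator (measurableSet_momentumSimplex _ _)]
        rfl
    _ = _ := by
        rw [lintegral_photonMeasure_fun_norm (f := fun r ↦ (ENNReal.ofReal (r ^ 2))⁻¹ *
          weightedSimplexIntegral m (t - r)) (by fun_prop)]
        congr 1
        refine setLIntegral_congr_fun measurableSet_Ioi fun r (hr : 0 < r) ↦ ?_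
        rw [← mul_assoc, ENNReal.mul_inv_cancel (by positivity) ENNReal.ofReal_ne_top, one_mul]

theorem weightedSimplexIntegral_eq (m : ℕ) {t : ℝ} (ht : 0 ≤ t) :
    weightedSimplexIntegral m t = ENNReal.ofReal ((8 * π * t) ^ m / m.factorial) := by
  induction m generalizing t with
  | zero => simp [weightedSimplexIntegral, momentumSimplex_zero ht, photonWeight]
  | succ m ih =>
    have h_inner : ∫⁻ r in Ioi 0, weightedSimplexIntegral m (t - r) =
        ∫⁻ r in Ioc 0 t,
          ENNReal.ofReal ((8 * π) ^ m / m.factorial) * ENNReal.ofReal ((t - r) ^ m) := by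
      rw [← Ioi_inter_Iic, inter_comm, ← Measure.restrict_restrict measurableSet_Iic,
        ← lintegral_indicator measurableSet_Iic]
      refine lintegral_congr fun r ↦ ?_
      rcases le_or_gt r t with hrt | hrt
      · rw [indicator_of_mem (mem_Iic.2 hrt), ih (sub_nonneg.2 hrt),
          ← ENNReal.ofReal_mul (by positivity)]
        congr 1
        rw [mul_pow]
        ring
      · rw [indicator_of_notMem (notMem_Iic.2 hrt),
          weightedSimplexIntegral_of_neg _ (sub_neg.2 hrt)]
    rw [weightedSimplexIntegral_succ, h_inner, lintegral_const_mul _ (by fun_prop),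
      setLIntegral_Ioc_ofReal_sub_pow ht, ← ENNReal.ofReal_mul (by positivity),
      ← ENNReal.ofReal_mul (by positivity)]
    congr 1
    rw [Nat.factorial_succ]
    push_cast
    field_simp
    ring

theorem weighted_L2_bound_of_kernel_general (m n : ℕ)
    (w : (Fin m → EuclideanSpace ℝ (Fin 3) × Fin 2) ×
      (Fin n → EuclideanSpace ℝ (Fin 3) × Fin 2) → ℂ)
    (hw_supp : ∀ᵐ x ∂(photonProdMeasure m n), x ∉ underlineS m n → w x = 0) :
    (∫⁻ x, (ENNReal.ofReal ((8 * Real.pi) ^ (m + n)))⁻¹ *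
          ((∏ i, (ENNReal.ofReal (‖(x.1 i).1‖ ^ 2))⁻¹) *
            ∏ j, (ENNReal.ofReal (‖(x.2 j).1‖ ^ 2))⁻¹) *
          (‖w x‖₊ : ℝ≥0∞) ^ 2 ∂(photonProdMeasure m n)) ^ (1 / 2 : ℝ)
      ≤ eLpNorm w ⊤ (photonProdMeasure m n) *
          (ENNReal.ofReal (Real.sqrt ((m.factorial : ℝ) * (n.factorial : ℝ))))⁻¹ := by
  have hw_simplex : ∀ᵐ x ∂photonProdMeasure m n,
      x ∉ momentumSimplex m 1 ×ˢ momentumSimplex n 1 → w x = 0 :=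
    hw_supp.mono fun x hx hx' ↦ hx fun hS ↦ hx' ⟨hS.2.2.1, hS.2.2.2⟩
  have h_const : (ENNReal.ofReal ((8 * π) ^ (m + n)))⁻¹ *
      (weightedSimplexIntegral m 1 * weightedSimplexIntegral n 1) =
        (ENNReal.ofReal √(m.factorial * n.factorial))⁻¹ ^ 2 := by
    have hF : (0 : ℝ) < m.factorial * n.factorial := by positivity
    rw [weightedSimplexIntegral_eq m zero_le_one, weightedSimplexIntegral_eq n zero_le_one,
      ← ENNReal.inv_pow, ← ENNReal.ofReal_pow (Real.sqrt_nonneg _), Real.sq_sqrt hF.le,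
      ← ENNReal.ofReal_inv_of_pos (by positivity), ← ENNReal.ofReal_inv_of_pos hF,
      ← ENNReal.ofReal_mul (by positivity), ← ENNReal.ofReal_mul (by positivity)]
    congr 1
    field_simp
    ring
  calc _ ≤ (eLpNorm w ⊤ (photonProdMeasure m n) ^ 2 *
        ∫⁻ x in momentumSimplex m 1 ×ˢ momentumSimplex n 1,
          (ENNReal.ofReal ((8 * π) ^ (m + n)))⁻¹ * (photonWeight m x.1 * photonWeight n x.2)
          ∂photonProdMeasure m n) ^ (1 / 2 : ℝ) := by
        gcongr
        exact lintegral_mul_enorm_pow_le_of_ae_eq_zero (by fun_prop)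
          ((measurableSet_momentumSimplex m 1).prod (measurableSet_momentumSimplex n 1))
          hw_simplex two_ne_zero
    _ = ((eLpNorm w ⊤ (photonProdMeasure m n) *
          (ENNReal.ofReal √(m.factorial * n.factorial))⁻¹) ^ 2) ^ (2⁻¹ : ℝ) := by
        rw [lintegral_const_mul _ (by fun_prop), photonProdMeasure,
          setLIntegral_prod_mul (measurable_photonWeight m) (measurable_photonWeight n),
          ← weightedSimplexIntegral, ← weightedSimplexIntegral, h_const, mul_pow]
        norm_num
    _ = _ := ENNReal.pow_rpow_inv_natCast two_ne_zero _

/-- For a measurable, essentially bounded integral kernel `w` supported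
(μ-a.e.) in `S̲_{m,n}`,
`(∫ (8π)^{-(m+n)} ∏ᵢ |kᵢ|⁻² ∏ⱼ |k̃ⱼ|⁻² |w|² dμ)^{1/2} ≤ ‖w‖_∞ (m! n!)^{-1/2}`. -/
theorem weighted_L2_bound_of_kernel (m n : ℕ)
    (w : (Fin m → EuclideanSpace ℝ (Fin 3) × Fin 2) ×
      (Fin n → EuclideanSpace ℝ (Fin 3) × Fin 2) → ℂ)
    (hw_meas : Measurable w)
    (hw_bdd : MemLp w ⊤ (photonProdMeasure m n))
    (hw_supp : ∀ᵐ x ∂(photonProdMeasure m n), x ∉ underlineS m n → w x = 0) :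
    (∫⁻ x, (ENNReal.ofReal ((8 * Real.pi) ^ (m + n)))⁻¹ *
          ((∏ i, (ENNReal.ofReal (‖(x.1 i).1‖ ^ 2))⁻¹) *
            ∏ j, (ENNReal.ofReal (‖(x.2 j).1‖ ^ 2))⁻¹) *
          (‖w x‖₊ : ℝ≥0∞) ^ 2 ∂(photonProdMeasure m n)) ^ (1 / 2 : ℝ)
      ≤ eLpNorm w ⊤ (photonProdMeasure m n) *
          (ENNReal.ofReal (Real.sqrt ((m.factorial : ℝ) * (n.factorial : ℝ))))⁻¹ :=
  weighted_L2_bound_of_kernel_general m n w hw_supp
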